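/- For every n ≥ 1, every i ∈ [n], and every a ∈ ℝⁿ, the partial derivative ∂Boltz(a)/∂a_i is strictly negative if and only if a_i < ℒ(a) − 𝒮(σ_S[a]) − 1, where ℒ(a) = log(Σ_j e^{a_j}). -/

import Mathlib

open scoped BigOperators Classical
open Matrix

noncomputable section

def softmax {n : ℕ} (a : Fin n → ℝ) : Fin n → ℝ :=
  fun i => Real.exp (a i) / ∑ j, Real.exp (a j)

def boltz {n : ℕ} (a : Fin n → ℝ) : ℝ := ∑ i, a i * softmax a i

def argmaxSet {n : ℕ} (a : Fin n → ℝ) : Finset (Fin n) :=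
  Finset.univ.filter (fun i => ∀ j, a j ≤ a i)

def hardmax {n : ℕ} (a : Fin n → ℝ) : Fin n → ℝ :=
  fun i => if i ∈ argmaxSet a then (1 : ℝ) / (argmaxSet a).card else 0

def softmaxCols {n m : ℕ} (A : Matrix (Fin n) (Fin m) ℝ) : Matrix (Fin n) (Fin m) ℝ :=
  Matrix.of fun i k => softmax (fun j => A j k) i

def hardmaxCols {n m : ℕ} (A : Matrix (Fin n) (Fin m) ℝ) : Matrix (Fin n) (Fin m) ℝ :=
  Matrix.of fun i k => hardmax (fun j => A j k) i

def attnS {d n s : ℕ} (WO : Matrix (Fin d) (Fin s) ℝ)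
    (WV WK WQ : Matrix (Fin s) (Fin d) ℝ) (Z : Matrix (Fin d) (Fin n) ℝ) :
    Matrix (Fin d) (Fin n) ℝ :=
  Z + WO * (WV * Z) * softmaxCols ((WK * Z)ᵀ * (WQ * Z))

def attnH {d n s h : ℕ} (WO : Fin h → Matrix (Fin d) (Fin s) ℝ)
    (WV WK WQ : Fin h → Matrix (Fin s) (Fin d) ℝ) (Z : Matrix (Fin d) (Fin n) ℝ) :
    Matrix (Fin d) (Fin n) ℝ :=
  Z + ∑ i, WO i * (WV i * Z) * hardmaxCols ((WK i * Z)ᵀ * (WQ i * Z))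

def l2norm {d : ℕ} (x : Fin d → ℝ) : ℝ := Real.sqrt (∑ t, (x t) ^ 2)

def TokSep {d n N : ℕ} (rmin rmax δ : ℝ) (X : Fin N → Matrix (Fin d) (Fin n) ℝ) : Prop :=
  (∀ i k, rmin < l2norm (fun t => X i t k)) ∧
  (∀ i k, l2norm (fun t => X i t k) < rmax) ∧
  (∀ i j k l, (fun t => X i t k) ≠ (fun t => X j t l) →
    δ < l2norm (fun t => X i t k - X j t l))

def vocab {d n : ℕ} (X : Matrix (Fin d) (Fin n) ℝ) : Finset (Fin d → ℝ) :=
  Finset.image (fun k => (fun t => X t k)) Finset.univ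

def ContextualMapping {d n N : ℕ} (X : Fin N → Matrix (Fin d) (Fin n) ℝ)
    (q : Matrix (Fin d) (Fin n) ℝ → Matrix (Fin d) (Fin n) ℝ) (r δ : ℝ) : Prop :=
  (∀ i k, l2norm (fun t => q (X i) t k) < r) ∧
  (∀ i j k l, (vocab (X i) ≠ vocab (X j) ∨ (fun t => X i t k) ≠ (fun t => X j t l)) →
    δ < l2norm (fun t => q (X i) t k - q (X j) t l))

def ffn {d n q : ℕ} (W1 : Matrix (Fin q) (Fin d) ℝ) (W2 : Matrix (Fin d) (Fin q) ℝ)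
    (b1 : Fin q → ℝ) (b2 : Fin d → ℝ) (H : Matrix (Fin d) (Fin n) ℝ) :
    Matrix (Fin d) (Fin n) ℝ :=
  Matrix.of fun t k =>
    H t k + W2.mulVec (fun u => max 0 (W1.mulVec (fun t' => H t' k) u + b1 u)) t + b2 t

def logSumExp {n : ℕ} (a : Fin n → ℝ) : ℝ := Real.log (∑ i, Real.exp (a i))

def entS {n : ℕ} (p : Fin n → ℝ) : ℝ := -∑ i, p i * Real.log (p i)

/-!
Differentiating the quotient `Boltz(a) = (∑ aⱼ e^{aⱼ}) / ∑ e^{aⱼ}` in `aᵢ` gives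
`∂Boltz/∂aᵢ = σᵢ (1 + aᵢ - Boltz(a))`, and `log σⱼ = aⱼ - ℒ(a)` gives `𝒮(σ) = ℒ(a) - Boltz(a)`.
Since `σᵢ > 0`, the derivative is negative exactly when `aᵢ < Boltz(a) - 1 = ℒ(a) - 𝒮(σ) - 1`.
-/

lemma sum_exp_pos {n : ℕ} (a : Fin n → ℝ) (i : Fin n) : 0 < ∑ j, Real.exp (a j) :=
  Finset.sum_pos (fun _ _ => Real.exp_pos _) ⟨i, Finset.mem_univ i⟩

lemma softmax_pos {n : ℕ} (a : Fin n → ℝ) (i : Fin n) : 0 < softmax a i :=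
  div_pos (Real.exp_pos _) (sum_exp_pos a i)

lemma boltz_eq_div {n : ℕ} (a : Fin n → ℝ) :
    boltz a = (∑ j, a j * Real.exp (a j)) / ∑ j, Real.exp (a j) := by
  simp only [boltz, softmax, Finset.sum_div, mul_div_assoc]

lemma entS_softmax {n : ℕ} (a : Fin n → ℝ) : entS (softmax a) = logSumExp a - boltz a := by
  rcases isEmpty_or_nonempty (Fin n) with _ | ⟨⟨i⟩⟩
  · simp [entS, logSumExp, boltz]
  have hZ := sum_exp_pos a i
  have hsum : ∑ j, softmax a j = 1 := by
    simp only [softmax, ← Finset.sum_div, div_self hZ.ne']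
  have hlog : ∀ j, Real.log (softmax a j) = a j - logSumExp a := fun j => by
    rw [softmax, Real.log_div (Real.exp_ne_zero _) hZ.ne', Real.log_exp, logSumExp]
  simp only [entS, boltz, hlog, mul_sub, Finset.sum_sub_distrib, ← Finset.sum_mul, hsum, one_mul,
    mul_comm (softmax a _) (a _)]
  ring

lemma hasDerivAt_sum_update {n : ℕ} (a : Fin n → ℝ) (i : Fin n) {g : ℝ → ℝ} {g' : ℝ}
    (hg : HasDerivAt g g' (a i)) :
    HasDerivAt (fun x => ∑ j, g (Function.update a i x j)) g' (a i) := by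
  have hsplit : ∀ x, ∑ j, g (Function.update a i x j)
      = g x + ∑ j ∈ Finset.univ.erase i, g (a j) := fun x => by
    rw [← Finset.add_sum_erase _ _ (Finset.mem_univ i), Function.update_self]
    congr 1
    exact Finset.sum_congr rfl fun j hj => by
      rw [Function.update_of_ne (Finset.ne_of_mem_erase hj)]
  simpa only [hsplit] using hg.add_const _

theorem hasDerivAt_boltz_update {n : ℕ} (a : Fin n → ℝ) (i : Fin n) :
    HasDerivAt (fun x => boltz (Function.update a i x))
      (softmax a i * (1 + a i - boltz a)) (a i) := by
  have hnum := hasDerivAt_sum_update a i (g := fun y => y * Real.exp y)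
    ((hasDerivAt_id' (a i)).mul (Real.hasDerivAt_exp (a i)))
  have hden := hasDerivAt_sum_update a i (Real.hasDerivAt_exp (a i))
  have hquot := hnum.fun_div hden (sum_exp_pos _ i).ne'
  simp only [Function.update_eq_self, ← boltz_eq_div] at hquot
  refine hquot.congr_deriv ?_
  have hZ := (sum_exp_pos a i).ne'
  rw [boltz_eq_div, softmax]
  field_simp

theorem statement10_general (n : ℕ) (i : Fin n) (a : Fin n → ℝ) :
    deriv (fun x => boltz (Function.update a i x)) (a i) < 0 ↔
      a i < logSumExp a - entS (softmax a) - 1 := by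
  rw [(hasDerivAt_boltz_update a i).deriv, entS_softmax, mul_neg_iff]
  have hσ := softmax_pos a i
  constructor
  · rintro (⟨-, h⟩ | ⟨h, -⟩) <;> linarith
  · intro h
    exact Or.inl ⟨hσ, by linarith⟩

theorem statement10 (n : ℕ) (hn : 1 ≤ n) (i : Fin n) (a : Fin n → ℝ) :
    deriv (fun x => boltz (Function.update a i x)) (a i) < 0 ↔
      a i < logSumExp a - entS (softmax a) - 1 :=
  statement10_general n i a

end
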